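/- (Proposition 4, completeness.) Assume V is finite dimensional and D₁ + m·id is bijective on V for every positive integer m. For q ∈ V let Pⱼ q = (𝒜₁𝒜₂⋯𝒜ⱼ)(q) ∈ V[x] (q viewed as a constant polynomial; P₀ q = q). Then for every f ∈ V[x] of degree at most k there exist unique q₀, q₁, …, qₖ ∈ V such that f = Σ_{j=0}^{k} Pⱼ qⱼ. -/
import Mathlib


/-- Multiplication by `x` on `V[x]`, where a polynomial with coefficients in `V`
is encoded as a finitely supported function `ℕ →₀ V` (its coefficients). -/
noncomputable def xmul {V : Type*} [AddCommGroup V] [Module ℂ V] (r : ℕ →₀ V) : ℕ →₀ V :=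
  Finsupp.mapDomain (· + 1) r

/-- Formal differentiation `r ↦ r′` on `V[x]`. -/
noncomputable def fder {V : Type*} [AddCommGroup V] [Module ℂ V] (r : ℕ →₀ V) : ℕ →₀ V :=
  r.sum fun n v => Finsupp.single (n - 1) ((n : ℂ) • v)

/-- Multiplication by `x² − 1` on `V[x]`. -/
noncomputable def qmul {V : Type*} [AddCommGroup V] [Module ℂ V] (r : ℕ →₀ V) : ℕ →₀ V :=
  xmul (xmul r) - r

/-- Coefficientwise action of a linear map `D : V → V` on `V[x]`. -/
noncomputable def cmap {V : Type*} [AddCommGroup V] [Module ℂ V] (D : V →ₗ[ℂ] V)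
    (r : ℕ →₀ V) : ℕ →₀ V :=
  Finsupp.mapRange D (map_zero D) r

/-- The operator `𝒜ⱼ r = x·(2j·r + D₁r) + D₂r + (x²−1)·r′` on `V[x]`. -/
noncomputable def Aop {V : Type*} [AddCommGroup V] [Module ℂ V] (D₁ D₂ : V →ₗ[ℂ] V)
    (j : ℕ) (r : ℕ →₀ V) : ℕ →₀ V :=
  xmul ((2 * (j : ℂ)) • r + cmap D₁ r) + cmap D₂ r + qmul (fder r)

/-- The composition `𝒜₁𝒜₂⋯𝒜ₖ` on `V[x]` (the identity for `k = 0`). -/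
noncomputable def Aprod {V : Type*} [AddCommGroup V] [Module ℂ V] (D₁ D₂ : V →ₗ[ℂ] V) :
    ℕ → (ℕ →₀ V) → (ℕ →₀ V)
  | 0 => id
  | (k + 1) => fun r => Aprod D₁ D₂ k (Aop D₁ D₂ (k + 1) r)

section Aux

variable {V : Type*} [AddCommGroup V] [Module ℂ V]

lemma xmul_succ (r : ℕ →₀ V) (i : ℕ) : xmul r (i + 1) = r i :=
  Finsupp.mapDomain_apply (add_left_injective 1) r i

lemma xmul_zero' (r : ℕ →₀ V) : xmul r 0 = 0 :=
  Finsupp.mapDomain_notin_range _ _ (by simp)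

lemma fder_apply (r : ℕ →₀ V) (m : ℕ) : fder r m = ((m + 1 : ℕ) : ℂ) • r (m + 1) := by
  classical
  unfold fder
  rw [Finsupp.sum_apply, Finsupp.sum]
  by_cases h : m + 1 ∈ r.support
  · rw [Finset.sum_eq_single (m + 1)]
    · simp [Finsupp.single_apply]
    · intro b hb hne
      rw [Finsupp.single_apply]
      split_ifs with hb1
      · have : b = 0 := by omega
        subst this; simp
      · rfl
    · intro h'; exact absurd h h'
  · have h1 : r (m + 1) = 0 := Finsupp.notMem_support_iff.mp h
    rw [h1, smul_zero]
    apply Finset.sum_eq_zero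
    intro b hb
    rw [Finsupp.single_apply]
    split_ifs with hb1
    · rcases (by omega : b = 0 ∨ b = m + 1) with h0 | h0
      · subst h0; simp
      · subst h0; simp [h1]
    · rfl

lemma aop_high {D₁ D₂ : V →ₗ[ℂ] V} {d : ℕ} {r : ℕ →₀ V} (h : ∀ i, d < i → r i = 0)
    (j : ℕ) : ∀ i, d + 1 < i → Aop D₁ D₂ j r i = 0 := by
  intro i hi
  obtain ⟨i, rfl⟩ : ∃ i', i = i' + 2 := ⟨i - 2, by omega⟩
  unfold Aop qmul
  simp only [Finsupp.add_apply, Finsupp.sub_apply, cmap, Finsupp.mapRange_apply]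
  rw [show i + 2 = (i + 1) + 1 from rfl, xmul_succ, xmul_succ, xmul_succ,
    fder_apply, fder_apply, Finsupp.add_apply, Finsupp.smul_apply,
    h _ (by omega), h _ (by omega), h _ (by omega)]
  simp [Finsupp.mapRange_apply, h _ (show d < i + 1 by omega)]

lemma aop_top {D₁ D₂ : V →ₗ[ℂ] V} {d : ℕ} {r : ℕ →₀ V} (h : ∀ i, d < i → r i = 0)
    (j : ℕ) : Aop D₁ D₂ j r (d + 1) = D₁ (r d) + ((2 * j + d : ℕ) : ℂ) • r d := by
  unfold Aop qmul
  simp only [Finsupp.add_apply, Finsupp.sub_apply, cmap, Finsupp.mapRange_apply]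
  rw [xmul_succ, fder_apply, h _ (by omega), h _ (by omega), Finsupp.add_apply,
    Finsupp.smul_apply]
  have hq : xmul (xmul (fder r)) (d + 1) = ((d : ℕ) : ℂ) • r d := by
    match d with
    | 0 => rw [show (0:ℕ) + 1 = 0 + 1 from rfl, xmul_succ, xmul_zero']; simp
    | d + 1 =>
      rw [show d + 1 + 1 = (d + 1) + 1 from rfl, xmul_succ, xmul_succ, fder_apply]
  rw [hq]
  simp only [map_zero, smul_zero, add_zero, zero_add, Finsupp.mapRange_apply]
  push_cast
  rw [add_smul]
  ring_nf
  abel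

/-- Leading coefficient map of `Aprod n` on polynomials of degree `d`. -/
noncomputable def prodmap {V : Type*} [AddCommGroup V] [Module ℂ V] (D₁ : V →ₗ[ℂ] V) :
    ℕ → ℕ → V → V
  | 0, _ => id
  | (n + 1), d => fun v => prodmap D₁ n (d + 1) (D₁ v + ((2 * (n + 1) + d : ℕ) : ℂ) • v)

lemma aprod_high {D₁ D₂ : V →ₗ[ℂ] V} (n : ℕ) :
    ∀ {d : ℕ} {r : ℕ →₀ V}, (∀ i, d < i → r i = 0) →
      ∀ i, d + n < i → Aprod D₁ D₂ n r i = 0 := by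
  induction n with
  | zero => intro d r h i hi; exact h i (by omega)
  | succ n ih =>
    intro d r h i hi
    show Aprod D₁ D₂ n (Aop D₁ D₂ (n + 1) r) i = 0
    exact ih (aop_high h (n + 1)) i (by omega)

lemma aprod_top {D₁ D₂ : V →ₗ[ℂ] V} (n : ℕ) :
    ∀ {d : ℕ} {r : ℕ →₀ V}, (∀ i, d < i → r i = 0) →
      Aprod D₁ D₂ n r (d + n) = prodmap D₁ n d (r d) := by
  induction n with
  | zero => intro d r h; rfl
  | succ n ih =>
    intro d r h
    show Aprod D₁ D₂ n (Aop D₁ D₂ (n + 1) r) (d + (n + 1)) = _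
    have := ih (d := d + 1) (r := Aop D₁ D₂ (n + 1) r) (aop_high h (n + 1))
    rw [show d + (n + 1) = (d + 1) + n by omega, this, aop_top h (n + 1)]
    rfl

lemma prodmap_bij {D₁ : V →ₗ[ℂ] V}
    (hbij : ∀ m : ℕ, 0 < m → Function.Bijective fun v : V => D₁ v + (m : ℂ) • v)
    (n : ℕ) : ∀ d : ℕ, Function.Bijective (prodmap D₁ n d) := by
  induction n with
  | zero => intro d; exact Function.bijective_id
  | succ n ih =>
    intro d
    exact (ih (d + 1)).comp (hbij (2 * (n + 1) + d) (by omega))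

omit [Module ℂ V] in
lemma single_high (v : V) : ∀ i : ℕ, 0 < i → (Finsupp.single 0 v : ℕ →₀ V) i = 0 := by
  intro i hi
  exact Finsupp.single_eq_of_ne (by omega)

lemma aprod_single_high {D₁ D₂ : V →ₗ[ℂ] V} (v : V) (n : ℕ) :
    ∀ i, n < i → Aprod D₁ D₂ n (Finsupp.single 0 v) i = 0 := by
  intro i hi
  exact aprod_high n (single_high v) i (by omega)

lemma aprod_single_top {D₁ D₂ : V →ₗ[ℂ] V} (v : V) (n : ℕ) :
    Aprod D₁ D₂ n (Finsupp.single 0 v) n = prodmap D₁ n 0 v := by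
  have := aprod_top (D₁ := D₁) (D₂ := D₂) n (single_high v)
  simpa using this

end Aux

/-- Proposition 4 (completeness). Assume `V` is finite dimensional and `D₁ + m·id` is
bijective on `V` for every positive integer `m`. For `q ∈ V` let
`Pⱼ q = (𝒜₁𝒜₂⋯𝒜ⱼ)(q)` (`q` viewed as a constant polynomial; `P₀ q = q`). Then every
`f ∈ V[x]` of degree at most `k` has a unique representation `f = Σ_{j=0}^{k} Pⱼ qⱼ`
with `q₀, …, qₖ ∈ V`. -/
theorem stmt_8 {V : Type*} [AddCommGroup V] [Module ℂ V] [FiniteDimensional ℂ V]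
    (D₁ D₂ : V →ₗ[ℂ] V)
    (hbij : ∀ m : ℕ, 0 < m → Function.Bijective fun v : V => D₁ v + (m : ℂ) • v)
    (k : ℕ) (f : ℕ →₀ V) (hf : ∀ i : ℕ, k < i → f i = 0) :
    ∃! q : Fin (k + 1) → V,
      f = ∑ j : Fin (k + 1), Aprod D₁ D₂ (j : ℕ) (Finsupp.single 0 (q j)) := by
  induction k generalizing f with
  | zero =>
    refine ⟨fun _ => f 0, ?_, ?_⟩
    · ext i
      rw [Fin.sum_univ_one]
      match i with
      | 0 => simp [Aprod]
      | (i + 1) => rw [hf _ (by omega)]; simp [Aprod, Finsupp.single_apply]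
    · intro q hq
      funext j
      have h0 : q 0 = f 0 := by
        rw [hq, Fin.sum_univ_one]; simp [Aprod]
      have hj : j = 0 := Fin.ext (by omega)
      rw [hj, h0]
  | succ k ih =>
    obtain ⟨qt, hqt⟩ := (prodmap_bij hbij (k + 1) 0).surjective (f (k + 1))
    set P := Aprod D₁ D₂ (k + 1) (Finsupp.single 0 qt) with hP
    have hg : ∀ i, k < i → (f - P) i = 0 := by
      intro i hi
      rw [Finsupp.sub_apply]
      rcases eq_or_lt_of_le (Nat.succ_le_of_lt hi) with h | h
      · rw [← h, hP, aprod_single_top, hqt, sub_self]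
      · rw [hf i h, hP, aprod_single_high qt (k + 1) i h, sub_self]
    obtain ⟨q, hq, huniq⟩ := ih (f - P) hg
    refine ⟨Fin.snoc q qt, ?_, ?_⟩
    · beta_reduce
      rw [Fin.sum_univ_castSucc]
      simp only [Fin.snoc_castSucc, Fin.snoc_last, Fin.coe_castSucc, Fin.val_last]
      rw [← hP, ← hq, sub_add_cancel]
    · intro Q hQ
      have hsum : ∀ m : ℕ,
          f m = ∑ j : Fin (k + 2), Aprod D₁ D₂ (j : ℕ) (Finsupp.single 0 (Q j)) m := by
        intro m
        rw [hQ, Finsupp.finset_sum_apply]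
      have hlast : Q (Fin.last (k + 1)) = qt := by
        apply (prodmap_bij hbij (k + 1) 0).injective
        rw [hqt]
        rw [hsum (k + 1), Fin.sum_univ_castSucc]
        rw [Finset.sum_eq_zero, zero_add]
        · simp only [Fin.val_last]
          rw [aprod_single_top]
        · intro j _
          simp only [Fin.coe_castSucc]
          exact aprod_single_high _ _ _ (j.isLt)
      have hrest : (fun j : Fin (k + 1) => Q (Fin.castSucc j)) = q := by
        apply huniq
        rw [hQ, Fin.sum_univ_castSucc]
        simp only [Fin.coe_castSucc, Fin.val_last, hlast]
        rw [← hP, add_sub_cancel_right]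
      funext j
      refine Fin.lastCases ?_ ?_ j
      · rw [hlast, Fin.snoc_last]
      · intro i
        rw [Fin.snoc_castSucc]
        exact congrFun hrest i
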